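/- Let G be a finite connected undirected simple graph with n = |V(G)| ≥ 2 vertices and let r_i, r_j ∈ V(G). Assume Σ_{v∈V(G)} δ_{v•}(r_i) > 0 and Σ_{v∈V(G)} δ_{v•}(r_j) > 0 (equivalently BC(r_i) > 0 and BC(r_j) > 0), and assume there exists a vertex v with δ_{v•}(r_i) > 0 and δ_{v•}(r_j) > 0. Define the optimal sampling distribution P_r[v] := δ_{v•}(r) / Σ_{u∈V(G)} δ_{u•}(r). Then BC(r_i)/BC(r_j) = (Σ_{v∈V(G)} P_{r_j}[v] · min{1, δ_{v•}(r_i)/δ_{v•}(r_j)}) / (Σ_{v∈V(G)} P_{r_i}[v] · min{1, δ_{v•}(r_j)/δ_{v•}(r_i)}); that is, the ratio of the betweenness scores equals the ratio of the expected values, under P_{r_j} and P_{r_i} respectively, of the Metropolis acceptance ratios min{1, δ_{v•}(r_i)/δ_{v•}(r_j)} and min{1, δ_{v•}(r_j)/δ_{v•}(r_i)}. -/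
import Mathlib


open Finset

/-- Number of shortest paths between `s` and `t`: paths of length `dist s t`. -/
noncomputable def nsp {V : Type*} (G : SimpleGraph V) (s t : V) : ℕ :=
  Nat.card {p : G.Walk s t // p.IsPath ∧ p.length = G.dist s t}

/-- Number of shortest paths between `s` and `t` passing through `x`. -/
noncomputable def nspThrough {V : Type*} (G : SimpleGraph V) (s t x : V) : ℕ :=
  Nat.card {p : G.Walk s t // (p.IsPath ∧ p.length = G.dist s t) ∧ x ∈ p.support}

/-- Pair dependency δ_{st}(x) = σ_{st}(x)/σ_{st} (zero when x ∈ {s,t};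
division by zero gives 0). -/
noncomputable def pairDep {V : Type*} [DecidableEq V] (G : SimpleGraph V)
    (s t x : V) : ℝ :=
  if x = s ∨ x = t then 0 else (nspThrough G s t x : ℝ) / (nsp G s t : ℝ)

/-- Dependency score δ_{s•}(x) = Σ_{t ∉ {s,x}} δ_{st}(x); in particular δ_{x•}(x) = 0. -/
noncomputable def depScore {V : Type*} [Fintype V] [DecidableEq V]
    (G : SimpleGraph V) (s x : V) : ℝ :=
  ∑ t ∈ Finset.univ \ {s, x}, pairDep G s t x

/-- Betweenness centrality BC(x) = (1/(n(n-1))) Σ_{s ≠ x} δ_{s•}(x). -/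
noncomputable def bc {V : Type*} [Fintype V] [DecidableEq V]
    (G : SimpleGraph V) (x : V) : ℝ :=
  (1 / ((Fintype.card V : ℝ) * ((Fintype.card V : ℝ) - 1))) *
    ∑ s ∈ Finset.univ \ {x}, depScore G s x

/-- `C : Fin l → Finset V` is the family of vertex sets of the connected components
of `G − r`: each `C i` is nonempty, they are pairwise disjoint, they cover
`V(G) ∖ {r}`, and two vertices lie in the same `C i` iff they are joined by a walk
of `G` avoiding `r`. -/
def IsCompFamily {V : Type*} (G : SimpleGraph V) (r : V)
    {l : ℕ} (C : Fin l → Finset V) : Prop :=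
  (∀ i, (C i).Nonempty) ∧
  (∀ v : V, v ≠ r ↔ ∃ i, v ∈ C i) ∧
  (∀ i j, i ≠ j → Disjoint (C i) (C j)) ∧
  (∀ i, ∀ u ∈ C i, ∀ v : V, (v ∈ C i ↔ ∃ p : G.Walk u v, r ∉ p.support))

lemma termEq (a b S : ℝ) (ha : 0 ≤ a) (hb : 0 ≤ b) :
    b / S * min 1 (a / b) = min b a / S := by
  rcases eq_or_lt_of_le hb with h | h
  · simp [← h, min_eq_left ha]
  · have hb' : b ≠ 0 := ne_of_gt h
    rw [show (1 : ℝ) = b / b by rw [div_self hb'], min_div_div_right hb,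
      div_mul_div_comm, mul_comm b (min b a), mul_div_mul_right _ _ hb']

lemma pairDep_nonneg' {V : Type*} [DecidableEq V] (G : SimpleGraph V) (s t x : V) :
    0 ≤ pairDep G s t x := by
  unfold pairDep; split <;> positivity

lemma depScore_nonneg' {V : Type*} [Fintype V] [DecidableEq V] (G : SimpleGraph V)
    (s x : V) : 0 ≤ depScore G s x :=
  Finset.sum_nonneg fun t _ => pairDep_nonneg' G s t x

lemma depScore_self' {V : Type*} [Fintype V] [DecidableEq V] (G : SimpleGraph V)
    (x : V) : depScore G x x = 0 := by
  apply Finset.sum_eq_zero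
  intro t _
  unfold pairDep
  rw [if_pos (Or.inl rfl)]


/-- the ratio of betweenness scores equals the ratio of the expected
Metropolis acceptance ratios under the optimal sampling distributions. -/
theorem stmt_1 {V : Type*} [Fintype V] [DecidableEq V] (G : SimpleGraph V)
    (hconn : G.Connected) (hn : 2 ≤ Fintype.card V) (ri rj : V)
    (hi : 0 < ∑ v : V, depScore G v ri) (hj : 0 < ∑ v : V, depScore G v rj)
    (hvex : ∃ v : V, 0 < depScore G v ri ∧ 0 < depScore G v rj) :
    bc G ri / bc G rj =
      (∑ v : V, (depScore G v rj / ∑ u : V, depScore G u rj) *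
          min 1 (depScore G v ri / depScore G v rj)) /
      (∑ v : V, (depScore G v ri / ∑ u : V, depScore G u ri) *
          min 1 (depScore G v rj / depScore G v ri)) := by
  set Si := ∑ v : V, depScore G v ri with hSi
  set Sj := ∑ v : V, depScore G v rj with hSj
  set M := ∑ v : V, min (depScore G v rj) (depScore G v ri) with hM
  have hMpos : 0 < M := by
    obtain ⟨v, hvi, hvj⟩ := hvex
    exact Finset.sum_pos' (fun u _ => le_min (depScore_nonneg' G u rj)
      (depScore_nonneg' G u ri)) ⟨v, mem_univ v, lt_min hvj hvi⟩
  have h1 : (∑ v : V, (depScore G v rj / Sj) *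
      min 1 (depScore G v ri / depScore G v rj)) = M / Sj := by
    rw [hM, Finset.sum_div]
    exact Finset.sum_congr rfl fun v _ =>
      termEq _ _ _ (depScore_nonneg' G v ri) (depScore_nonneg' G v rj)
  have h2 : (∑ v : V, (depScore G v ri / Si) *
      min 1 (depScore G v rj / depScore G v ri)) = M / Si := by
    rw [hM, Finset.sum_div]
    refine Finset.sum_congr rfl fun v _ => ?_
    rw [min_comm (depScore G v rj) (depScore G v ri)]
    exact termEq _ _ _ (depScore_nonneg' G v rj) (depScore_nonneg' G v ri)
  rw [h1, h2]
  have hbi : bc G ri = (1 / ((Fintype.card V : ℝ) * ((Fintype.card V : ℝ) - 1))) * Si := by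
    rw [bc, Finset.sum_sdiff_eq_sub (subset_univ _), Finset.sum_singleton,
      depScore_self', sub_zero]
  have hbj : bc G rj = (1 / ((Fintype.card V : ℝ) * ((Fintype.card V : ℝ) - 1))) * Sj := by
    rw [bc, Finset.sum_sdiff_eq_sub (subset_univ _), Finset.sum_singleton,
      depScore_self', sub_zero]
  have hcard : (2 : ℝ) ≤ (Fintype.card V : ℝ) := by exact_mod_cast hn
  have hc : (0 : ℝ) < 1 / ((Fintype.card V : ℝ) * ((Fintype.card V : ℝ) - 1)) := by
    apply one_div_pos.mpr
    apply mul_pos (by linarith) (by linarith)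
  rw [hbi, hbj, mul_div_mul_left _ _ (ne_of_gt hc)]
  rw [div_div_div_comm, div_self (ne_of_gt hMpos), div_div_eq_mul_div, one_mul]
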